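/- arXiv:2101.08943 — 2 statements merged into one kernel-verified Lean document; each statement's English description precedes it below -/
import Mathlib

section
/- For any symmetric-parametrization list 𝒫, one has M(𝒫⁻) ≤ M(𝒫) ≤ M(𝒫⁺). -/
open Finset
open scoped Classical

noncomputable section

/-- The value `M(P) = ∑ v, μ v * |θ v|` of a symmetric-parametrization list
`P = ((μ v, θ v))_v`. -/
def Mval {V : Type*} [Fintype V] (μ θ : V → ℝ) : ℝ := ∑ v, μ v * |θ v|

/-- Weights of the minus transform `P⁻`. -/
def minusμ {V : Type*} (μ : V → ℝ) : V × V → ℝ := fun p => μ p.1 * μ p.2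

/-- Parameters of the minus transform `P⁻`. -/
def minusθ {V : Type*} (θ : V → ℝ) : V × V → ℝ := fun p => θ p.1 * θ p.2

/-- The sign `∓ᵤ` : `-1` when `u = 1` (`true`), `+1` when `u = 0` (`false`). -/
def sgn : Bool → ℝ := fun u => if u then -1 else 1

/-- Weights of the plus transform `P⁺`
(when `1 ∓ᵤ θ₀ θ₁ = 0` the formula yields `0`, matching the convention that the
entry is then `(0, 0)`). -/
def plusμ {V : Type*} (μ θ : V → ℝ) : Bool × V × V → ℝ :=
  fun p => μ p.2.1 * μ p.2.2 * (1 + sgn p.1 * (θ p.2.1 * θ p.2.2)) / 2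

/-- Parameters of the plus transform `P⁺`
(division by zero is `0` in Lean, matching the convention that the entry is
`(0, 0)` when `1 ∓ᵤ θ₀ θ₁ = 0`). -/
def plusθ {V : Type*} (θ : V → ℝ) : Bool × V × V → ℝ :=
  fun p => (θ p.2.2 + sgn p.1 * θ p.2.1) / (1 + sgn p.1 * (θ p.2.1 * θ p.2.2))

/-!
Both bounds come from computing `M` of the transforms. The minus transform is a product
list, so `M(𝒫⁻) = M(𝒫)²`, and `0 ≤ M(𝒫) ≤ 1`. For the plus transform, the inequality
`(θ₁ ∓ θ₀)² ≤ 2 (1 ∓ θ₀θ₁)` shows that the denominator `1 ∓ θ₀θ₁` is nonnegative and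
vanishes only together with the numerator, so the weight cancels it:
`μ⁺ |θ⁺| = μ₀μ₁ |θ₁ ∓ θ₀| / 2`. Summing over both signs gives
`μ₀μ₁ (|θ₁ - θ₀| + |θ₁ + θ₀|) / 2 ≥ μ₀μ₁ |θ₁|`, and the sum over `v₀` of the last term is `M(𝒫)`.
-/

lemma sq_add_sgn_mul_le (u : Bool) {a b : ℝ} (ha : |a| ≤ 1) (hb : |b| ≤ 1) :
    (b + sgn u * a) ^ 2 ≤ 2 * (1 + sgn u * (a * b)) := by
  have ha2 : a ^ 2 ≤ 1 := by nlinarith [abs_nonneg a, sq_abs a]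
  have hb2 : b ^ 2 ≤ 1 := by nlinarith [abs_nonneg b, sq_abs b]
  cases u <;> simp only [sgn, Bool.false_eq_true, if_true, if_false] <;> nlinarith

lemma mul_abs_div_self_of_sq_le {x d : ℝ} (h : x ^ 2 ≤ 2 * d) : d * |x / d| = |x| := by
  rcases (show 0 ≤ d by nlinarith [sq_nonneg x]).eq_or_lt with hd | hd
  · have hx : x = 0 := pow_eq_zero_iff two_ne_zero |>.mp (by nlinarith [sq_nonneg x])
    simp [hx]
  · rw [abs_div, abs_of_pos hd, mul_div_cancel₀ _ hd.ne']

lemma plusμ_mul_abs_plusθ {V : Type*} {μ θ : V → ℝ} (hθ : ∀ v, |θ v| ≤ 1)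
    (u : Bool) (v₀ v₁ : V) :
    plusμ μ θ (u, v₀, v₁) * |plusθ θ (u, v₀, v₁)|
      = μ v₀ * μ v₁ * |θ v₁ + sgn u * θ v₀| / 2 := by
  have h := mul_abs_div_self_of_sq_le (sq_add_sgn_mul_le u (hθ v₀) (hθ v₁))
  simp only [plusμ, plusθ] at h ⊢
  linear_combination μ v₀ * μ v₁ / 2 * h

section

variable {V : Type*} [Fintype V]

lemma Mval_nonneg {μ : V → ℝ} (hμ : ∀ v, 0 ≤ μ v) (θ : V → ℝ) : 0 ≤ Mval μ θ :=
  sum_nonneg fun v _ => mul_nonneg (hμ v) (abs_nonneg _)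

lemma Mval_le_sum {μ θ : V → ℝ} (hμ : ∀ v, 0 ≤ μ v) (hθ : ∀ v, |θ v| ≤ 1) :
    Mval μ θ ≤ ∑ v, μ v :=
  sum_le_sum fun v _ => mul_le_of_le_one_right (hμ v) (hθ v)

lemma Mval_minus (μ θ : V → ℝ) : Mval (minusμ μ) (minusθ θ) = Mval μ θ ^ 2 := by
  rw [sq, Mval, Mval, Fintype.sum_prod_type, sum_mul_sum]
  refine sum_congr rfl fun v₀ _ => sum_congr rfl fun v₁ _ => ?_
  rw [minusμ, minusθ, abs_mul]
  ring

lemma Mval_plus {μ θ : V → ℝ} (hθ : ∀ v, |θ v| ≤ 1) :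
    Mval (plusμ μ θ) (plusθ θ)
      = ∑ v₀, ∑ v₁, μ v₀ * μ v₁ * ((|θ v₁ - θ v₀| + |θ v₁ + θ v₀|) / 2) := by
  rw [Mval, Fintype.sum_prod_type, Fintype.sum_bool, Fintype.sum_prod_type,
    Fintype.sum_prod_type, ← sum_add_distrib]
  refine sum_congr rfl fun v₀ _ => ?_
  rw [← sum_add_distrib]
  refine sum_congr rfl fun v₁ _ => ?_
  rw [plusμ_mul_abs_plusθ hθ, plusμ_mul_abs_plusθ hθ]
  simp only [sgn, if_true, if_false, Bool.false_eq_true, neg_one_mul, one_mul, ← sub_eq_add_neg]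
  ring

lemma Mval_minus_le {μ θ : V → ℝ} (hμ : ∀ v, 0 ≤ μ v) (hsum : ∑ v, μ v ≤ 1)
    (hθ : ∀ v, |θ v| ≤ 1) : Mval (minusμ μ) (minusθ θ) ≤ Mval μ θ := by
  rw [Mval_minus]
  exact pow_le_of_le_one (Mval_nonneg hμ θ) ((Mval_le_sum hμ hθ).trans hsum) two_ne_zero

lemma Mval_le_Mval_plus {μ θ : V → ℝ} (hμ : ∀ v, 0 ≤ μ v) (hsum : ∑ v, μ v = 1)
    (hθ : ∀ v, |θ v| ≤ 1) : Mval μ θ ≤ Mval (plusμ μ θ) (plusθ θ) := by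
  have habs_le (a b : ℝ) : |b| ≤ (|b - a| + |b + a|) / 2 := by
    have h := abs_add_le (b - a) (b + a)
    rw [show b - a + (b + a) = 2 * b by ring, abs_mul, abs_two] at h
    linarith
  calc Mval μ θ = ∑ v₀, ∑ v₁, μ v₀ * μ v₁ * |θ v₁| := by
        simp_rw [mul_assoc, ← mul_sum, ← sum_mul, hsum, one_mul, Mval]
    _ ≤ ∑ v₀, ∑ v₁, μ v₀ * μ v₁ * ((|θ v₁ - θ v₀| + |θ v₁ + θ v₀|) / 2) :=
        sum_le_sum fun v₀ _ => sum_le_sum fun v₁ _ =>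
          mul_le_mul_of_nonneg_left (habs_le _ _) (mul_nonneg (hμ v₀) (hμ v₁))
    _ = Mval (plusμ μ θ) (plusθ θ) := (Mval_plus hθ).symm

end

theorem stmt2 {V : Type*} [Fintype V] (μ θ : V → ℝ)
    (hμ : ∀ v, 0 ≤ μ v) (hsum : ∑ v, μ v = 1) (hθ : ∀ v, θ v ∈ Set.Icc (-1 : ℝ) 1) :
    Mval (minusμ μ) (minusθ θ) ≤ Mval μ θ ∧ Mval μ θ ≤ Mval (plusμ μ θ) (plusθ θ) := by
  have habs : ∀ v, |θ v| ≤ 1 := fun v => abs_le.2 (hθ v)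
  exact ⟨Mval_minus_le hμ hsum.le habs, Mval_le_Mval_plus hμ hsum habs⟩

end
end

section
/- Let C ≥ 3, let μ_1, …, μ_C be positive reals with Σ_{v=1}^{C} μ_v = 1, and let 0 ≤ θ_1 < θ_2 < ⋯ < θ_C ≤ 1. For v ∈ {2, …, C−1} define μ'_{v−1} := μ_v·(θ_v − θ_{v−1})/(θ_{v+1} − θ_{v−1}) and μ'_{v+1} := μ_v·(θ_{v+1} − θ_v)/(θ_{v+1} − θ_{v−1}). Then min_{2 ≤ v ≤ C−1} μ'_{v−1}·μ'_{v+1}·(θ_{v+1} − θ_{v−1}) ≤ (1 − μ_C − μ_1)²·(θ_C − θ_2)/(C − 2)³, and consequently this minimum is at most θ_C/(C − 2)³. -/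
open Finset

/-!
Each term of the minimum is at most `μ_v ^ 2 * (θ_{v+1} - θ_v)`. A minimum of `n` nonnegative
numbers is at most their geometric mean, and AM–GM bounds `∏ μ_v ^ 2 * ∏ (θ_{v+1} - θ_v)` by
`(S / n) ^ (2n) * (T / n) ^ n`, where `S = 1 - μ_1 - μ_C` and, by telescoping,
`T = θ_C - θ_2`.
-/

theorem Real.prod_le_sum_div_card_pow {ι : Type*} (s : Finset ι) (f : ι → ℝ)
    (hf : ∀ i ∈ s, 0 ≤ f i) : ∏ i ∈ s, f i ≤ ((∑ i ∈ s, f i) / #s) ^ #s := by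
  rcases s.eq_empty_or_nonempty with rfl | hs
  · simp
  have hcard : (0 : ℝ) < #s := by exact_mod_cast hs.card_pos
  have amgm := Real.geom_mean_le_arith_mean s 1 f (fun _ _ => zero_le_one) (by simpa using hcard) hf
  simp only [Pi.one_apply, Real.rpow_one, one_mul, sum_const, nsmul_eq_mul, mul_one] at amgm
  rw [Real.rpow_inv_le_iff_of_pos (prod_nonneg hf) (div_nonneg (sum_nonneg hf) hcard.le) hcard,
    Real.rpow_natCast] at amgm
  exact amgm

theorem Finset.inf'_le_sq_sum_mul_sum_div_card_pow {ι : Type*} {s : Finset ι} (hs : s.Nonempty)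
    {F a d : ι → ℝ} (ha : ∀ i ∈ s, 0 ≤ a i) (hd : ∀ i ∈ s, 0 ≤ d i)
    (hF : ∀ i ∈ s, F i ≤ a i ^ 2 * d i) :
    s.inf' hs F ≤ (∑ i ∈ s, a i) ^ 2 * (∑ i ∈ s, d i) / #s ^ 3 := by
  set m := s.inf' hs F
  rcases le_or_gt m 0 with hm | hm
  · exact hm.trans (by positivity [sum_nonneg ha, sum_nonneg hd])
  have hcard : (0 : ℝ) < #s := by exact_mod_cast hs.card_pos
  set A := (∑ i ∈ s, a i) / #s
  set D := (∑ i ∈ s, d i) / #s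
  have hA : 0 ≤ A := div_nonneg (sum_nonneg ha) hcard.le
  have hD : 0 ≤ D := div_nonneg (sum_nonneg hd) hcard.le
  have key : m ^ #s ≤ (A ^ 2 * D) ^ #s := calc
    m ^ #s = ∏ _i ∈ s, m := (prod_const m).symm
    _ ≤ ∏ i ∈ s, a i ^ 2 * d i :=
      prod_le_prod (fun _ _ => hm.le) fun i hi => (inf'_le F hi).trans (hF i hi)
    _ = (∏ i ∈ s, a i) ^ 2 * ∏ i ∈ s, d i := by rw [prod_mul_distrib, prod_pow]
    _ ≤ (A ^ #s) ^ 2 * D ^ #s :=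
      mul_le_mul (pow_le_pow_left₀ (prod_nonneg ha) (Real.prod_le_sum_div_card_pow s a ha) 2)
        (Real.prod_le_sum_div_card_pow s d hd) (prod_nonneg hd) (by positivity)
    _ = (A ^ 2 * D) ^ #s := by ring
  calc m ≤ A ^ 2 * D := (pow_le_pow_iff_left₀ hm.le (by positivity) hs.card_pos.ne').1 key
    _ = _ := by simp only [A, D]; field_simp

theorem split_mass_product_le {μ p q r : ℝ} (hpr : p < r) (hqr : q ≤ r) :
    μ * (q - p) / (r - p) * (μ * (r - q) / (r - p)) * (r - p) ≤ μ ^ 2 * (r - q) := by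
  have hrp : 0 < r - p := sub_pos.2 hpr
  have hratio : (q - p) / (r - p) ≤ 1 := (div_le_one hrp).2 (by linarith)
  calc μ * (q - p) / (r - p) * (μ * (r - q) / (r - p)) * (r - p)
      = μ ^ 2 * (r - q) * ((q - p) / (r - p)) := by field_simp
    _ ≤ μ ^ 2 * (r - q) :=
      mul_le_of_le_one_right (mul_nonneg (sq_nonneg μ) (sub_nonneg.2 hqr)) hratio

theorem Fin.sum_succ_sub_castSucc {M : Type*} [AddCommGroup M] {n : ℕ} (f : Fin (n + 1) → M) :
    ∑ i : Fin n, (f i.succ - f i.castSucc) = f (Fin.last n) - f 0 := by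
  induction n with
  | zero => simp
  | succ n ih =>
    rw [Fin.sum_univ_castSucc]
    simp only [Fin.succ_castSucc]
    rw [ih (fun i => f i.castSucc), Fin.succ_last, Fin.castSucc_zero]
    abel

theorem Fin.sum_castLE_succ_eq {M : Type*} [AddCommGroup M] {n C : ℕ} (h : n + 2 = C)
    (f : Fin C → M) :
    ∑ w : Fin n, f (w.succ.castLE (by omega)) =
      ∑ v, f v - f ⟨C - 1, by omega⟩ - f ⟨0, by omega⟩ := by
  subst h
  rw [Fin.sum_univ_castSucc, Fin.sum_univ_succ]
  have hlast : (⟨n + 2 - 1, by omega⟩ : Fin (n + 2)) = Fin.last (n + 1) := Fin.ext (by simp)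
  rw [hlast, Fin.zero_eta, Fin.castSucc_zero, add_sub_cancel_right, add_sub_cancel_left]
  rfl

theorem Fin.sum_succ_succ_sub_succ {M : Type*} [AddCommGroup M] {n C : ℕ} (h : n + 2 = C)
    (f : Fin C → M) :
    ∑ w : Fin n, (f (w.succ.succ.cast h) - f (w.succ.castLE (by omega))) =
      f ⟨C - 1, by omega⟩ - f ⟨1, by omega⟩ := by
  subst h
  have := Fin.sum_succ_sub_castSucc (fun i : Fin (n + 1) => f i.succ)
  have hlast : (⟨n + 2 - 1, by omega⟩ : Fin (n + 2)) = (Fin.last n).succ := Fin.ext (by simp)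
  rw [hlast, show (⟨1, by omega⟩ : Fin (n + 2)) = Fin.succ 0 from rfl, ← this]
  rfl

theorem stmt19 (C : ℕ) (hC : 3 ≤ C) (μ θ : Fin C → ℝ)
    (hμ : ∀ v, 0 < μ v) (hsum : ∑ v, μ v = 1)
    (hθ0 : ∀ v, 0 ≤ θ v) (hmono : StrictMono θ) :
    (Finset.univ.inf' ⟨(⟨0, by omega⟩ : Fin (C - 2)), Finset.mem_univ _⟩
        (fun w : Fin (C - 2) =>
          (μ (w.succ.castLE (by omega))
              * (θ (w.succ.castLE (by omega)) - θ (w.castLE (by omega)))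
              / (θ (w.succ.succ.cast (by omega)) - θ (w.castLE (by omega))))
            * (μ (w.succ.castLE (by omega))
              * (θ (w.succ.succ.cast (by omega)) - θ (w.succ.castLE (by omega)))
              / (θ (w.succ.succ.cast (by omega)) - θ (w.castLE (by omega))))
            * (θ (w.succ.succ.cast (by omega)) - θ (w.castLE (by omega))))
      ≤ (1 - μ ⟨C - 1, by omega⟩ - μ ⟨0, by omega⟩) ^ 2
          * (θ ⟨C - 1, by omega⟩ - θ ⟨1, by omega⟩) / ((C : ℝ) - 2) ^ 3)
    ∧ (Finset.univ.inf' ⟨(⟨0, by omega⟩ : Fin (C - 2)), Finset.mem_univ _⟩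
        (fun w : Fin (C - 2) =>
          (μ (w.succ.castLE (by omega))
              * (θ (w.succ.castLE (by omega)) - θ (w.castLE (by omega)))
              / (θ (w.succ.succ.cast (by omega)) - θ (w.castLE (by omega))))
            * (μ (w.succ.castLE (by omega))
              * (θ (w.succ.succ.cast (by omega)) - θ (w.succ.castLE (by omega)))
              / (θ (w.succ.succ.cast (by omega)) - θ (w.castLE (by omega))))
            * (θ (w.succ.succ.cast (by omega)) - θ (w.castLE (by omega))))
      ≤ θ ⟨C - 1, by omega⟩ / ((C : ℝ) - 2) ^ 3) := by
  have hC2 : C - 2 + 2 = C := by omega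
  have hstep : ∀ {i j : Fin C}, i.val < j.val → θ i < θ j := fun h => hmono (Fin.lt_def.2 h)
  have hden : (0 : ℝ) ≤ ((C : ℝ) - 2) ^ 3 :=
    pow_nonneg (by linarith [show (3 : ℝ) ≤ C by exact_mod_cast hC]) 3
  refine (fun bound => ⟨bound, bound.trans (div_le_div_of_nonneg_right ?_ hden)⟩) ?_
  · refine (univ.inf'_le_sq_sum_mul_sum_div_card_pow _
      (a := fun w : Fin (C - 2) => μ (w.succ.castLE (by omega)))
      (d := fun w : Fin (C - 2) => θ (w.succ.succ.cast (by omega)) - θ (w.succ.castLE (by omega)))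
      (fun _ _ => (hμ _).le) (fun w _ => (sub_pos.2 (hstep (by simp))).le)
      (fun w _ => split_mass_product_le (hstep (by simp)) (hstep (by simp)).le)).trans_eq ?_
    rw [Fin.sum_castLE_succ_eq hC2, Fin.sum_succ_succ_sub_succ hC2, hsum, card_univ,
      Fintype.card_fin, Nat.cast_sub (by omega), Nat.cast_two]
  · have hS : 0 ≤ 1 - μ ⟨C - 1, by omega⟩ - μ ⟨0, by omega⟩ := by
      rw [← hsum, ← Fin.sum_castLE_succ_eq hC2]
      exact sum_nonneg fun _ _ => (hμ _).le
    have hS1 : 1 - μ ⟨C - 1, by omega⟩ - μ ⟨0, by omega⟩ ≤ 1 := by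
      linarith [hμ ⟨0, by omega⟩, hμ ⟨C - 1, by omega⟩]
    calc _ ≤ 1 * (θ ⟨C - 1, by omega⟩ - θ ⟨1, by omega⟩) :=
          mul_le_mul_of_nonneg_right (pow_le_one₀ hS hS1)
            (sub_nonneg.2 (hstep (by simp; omega)).le)
      _ ≤ θ ⟨C - 1, by omega⟩ := by linarith [hθ0 ⟨1, by omega⟩]
end
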